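/- Let M be a balanced allocation. M is the outcome of every recursively balanced policy if and only if for every round index t with 1 ≤ t ≤ k and every agent a_j, the item p_j^t is agent a_j's most preferred item among the items of I not contained in { p_{j'}^i : 1 ≤ j' ≤ n, 1 ≤ i < t } (the items M allocates in earlier rounds). -/

import Mathlib

open Finset
open scoped Classical

/-- The most preferred item of a nonempty finset w.r.t. a linear order
(greater means more preferred). -/
noncomputable def favorite {ι : Type} (L : LinearOrder ι) (S : Finset ι) (h : S.Nonempty) : ι :=
  @Finset.max' ι L S h

/-- Sequential allocation: process the turns in order; at each turn the agent whose
turn it is picks her most preferred item among the items not yet allocated.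
Returns the list of (agent, item) picks, in order. -/
noncomputable def seqAlloc {n : ℕ} {ι : Type} [DecidableEq ι]
    (P : Fin n → LinearOrder ι) : List (Fin n) → Finset ι → List (Fin n × ι)
  | [], _ => []
  | a :: rest, S =>
    if h : S.Nonempty then
      (a, favorite (P a) S h) :: seqAlloc P rest (S.erase (favorite (P a) S h))
    else []

/-- `M` is the outcome of the policy `π`: every item is picked by the agent that
`M` assigns it to. -/
def IsOutcome {n : ℕ} {ι : Type} [Fintype ι] [DecidableEq ι]
    (P : Fin n → LinearOrder ι) (π : List (Fin n)) (M : ι → Fin n) : Prop :=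
  ∀ o : ι, (M o, o) ∈ seqAlloc P π Finset.univ

/-- The set of items that agent `a` picks under the policy `π`. -/
noncomputable def receives {n : ℕ} {ι : Type} [Fintype ι] [DecidableEq ι]
    (P : Fin n → LinearOrder ι) (π : List (Fin n)) (a : Fin n) : Finset ι :=
  Finset.univ.filter (fun o => (a, o) ∈ seqAlloc P π Finset.univ)

/-- An allocation `M` is Pareto optimal if there is no bijection `f` of the items such
that every agent weakly prefers `f o` to `o` for each item `o` she gets, with at least
one strict preference. -/
def ParetoOptimal {n : ℕ} {ι : Type} (P : Fin n → LinearOrder ι) (M : ι → Fin n) : Prop :=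
  ¬ ∃ f : ι ≃ ι, (∀ o : ι, (P (M o)).le o (f o)) ∧ (∃ o : ι, (P (M o)).lt o (f o))

/-- A policy is balanced if every agent has exactly `k` turns. -/
def BalancedPolicy {n : ℕ} (k : ℕ) (π : List (Fin n)) : Prop :=
  ∀ a : Fin n, π.count a = k

/-- An allocation is balanced if every agent receives exactly `k` items. -/
def BalancedAlloc {n : ℕ} {ι : Type} [Fintype ι] (k : ℕ) (M : ι → Fin n) : Prop :=
  ∀ a : Fin n, (Finset.univ.filter (fun o => M o = a)).card = k

/-- A policy is recursively balanced if it splits into `k` consecutive rounds of `n`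
turns each, every agent having exactly one turn in each round. -/
def RecBalanced (n k : ℕ) (π : List (Fin n)) : Prop :=
  ∃ rounds : List (List (Fin n)), rounds.length = k ∧
    (∀ r ∈ rounds, r.length = n ∧ ∀ a : Fin n, r.count a = 1) ∧
    π = rounds.flatten

/-- A strict alternation policy: every one of the `k` rounds uses the same order `σ`
over the agents. -/
def StrictAlt (n k : ℕ) (π : List (Fin n)) : Prop :=
  ∃ σ : List (Fin n), σ.length = n ∧ (∀ a : Fin n, σ.count a = 1) ∧
    π = (List.replicate k σ).flatten

/-- A balanced alternation policy: odd-numbered rounds use the order `σ` over the agents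
and even-numbered rounds use its reverse. -/
def BalAlt (n k : ℕ) (π : List (Fin n)) : Prop :=
  ∃ σ : List (Fin n), σ.length = n ∧ (∀ a : Fin n, σ.count a = 1) ∧
    π = ((List.range k).map (fun r => if r % 2 = 0 then σ else σ.reverse)).flatten

/-- `p j i` (for `1 ≤ i ≤ k`) is the item ranked `i`-th by agent `j` among the items `M`
allocates to `j`: it is allocated to `j`, and exactly `i - 1` of the items allocated
to `j` are strictly preferred to it by agent `j`. -/
def IsRankingOf {n : ℕ} {ι : Type} [Fintype ι] (P : Fin n → LinearOrder ι) (k : ℕ)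
    (M : ι → Fin n) (p : Fin n → ℕ → ι) : Prop :=
  ∀ (j : Fin n) (i : ℕ), 1 ≤ i → i ≤ k →
    M (p j i) = j ∧
    (Finset.univ.filter (fun o => M o = j ∧ (P j).lt (p j i) o)).card = i - 1

/-- Condition 3: for all `1 ≤ t < s ≤ k` and all agents `j, j'`, agent `j` strictly
prefers `p j t` to `p j' s`. -/
def Cond3 {n : ℕ} {ι : Type} (P : Fin n → LinearOrder ι) (k : ℕ) (p : Fin n → ℕ → ι) : Prop :=
  ∀ t s : ℕ, 1 ≤ t → t < s → s ≤ k → ∀ j j' : Fin n, (P j).lt (p j' s) (p j t)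

/-- The edge relation of the directed graph `G_M`: for odd `i ≤ k` an edge `a → b`
whenever `b` strictly prefers `p a i` to `p b i`, and for even `i ≤ k` an edge `a → b`
whenever `a` strictly prefers `p b i` to `p a i`. -/
def GM {n : ℕ} {ι : Type} (P : Fin n → LinearOrder ι) (k : ℕ) (p : Fin n → ℕ → ι)
    (a b : Fin n) : Prop :=
  (∃ i : ℕ, 1 ≤ i ∧ i ≤ k ∧ i % 2 = 1 ∧ (P b).lt (p b i) (p a i)) ∨
  (∃ i : ℕ, 1 ≤ i ∧ i ≤ k ∧ i % 2 = 0 ∧ (P a).lt (p a i) (p b i))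

/-- The edge relation of the directed graph `H_M`: for each `i ≤ k` an edge `a → b`
whenever `b` strictly prefers `p a i` to `p b i`. -/
def HM {n : ℕ} {ι : Type} (P : Fin n → LinearOrder ι) (k : ℕ) (p : Fin n → ℕ → ι)
    (a b : Fin n) : Prop :=
  ∃ i : ℕ, 1 ≤ i ∧ i ≤ k ∧ (P b).lt (p b i) (p a i)

/-- The `k` most preferred items of agent `j`: those items with fewer than `k` items
strictly preferred to them by `j`. -/
noncomputable def topItems {n : ℕ} {ι : Type} [Fintype ι] (P : Fin n → LinearOrder ι)
    (k : ℕ) (j : Fin n) : Finset ι :=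
  Finset.univ.filter (fun o => (Finset.univ.filter (fun o' => (P j).lt o o')).card < k)

/-- The rank of item `o` in agent `j`'s preference (the most preferred item has rank 1). -/
noncomputable def rankOf {n : ℕ} {ι : Type} [Fintype ι] (P : Fin n → LinearOrder ι)
    (j : Fin n) (o : ι) : ℕ :=
  (Finset.univ.filter (fun o' => (P j).lt o o')).card + 1

/-!
When every agent's item of round `t` is her favourite among the items `M` has not allocated
in rounds before `t`, sequential allocation under any recursively balanced policy hands out,
round after round, exactly the items `p j t`; hence `M` is the outcome.

Conversely, argue by strong induction on `t`. Take the policy that repeats `k` times the order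
putting agent `j` first. By the induction hypothesis its first `t - 1` rounds allocate exactly
the items of rounds before `t`, so in round `t` agent `j` picks her favourite `f` among the
remaining items. As `M` is the outcome, `f` is one of `j`'s items not allocated earlier, so `f`
is weakly worse than `p j t`, which is itself still available: `f = p j t`.
-/

variable {ι : Type} {n k : ℕ}

section Favorite

variable (L : LinearOrder ι) {S : Finset ι} (h : S.Nonempty)

theorem favorite_mem : favorite L S h ∈ S := @Finset.max'_mem ι L S h

theorem le_favorite {o : ι} (ho : o ∈ S) : L.le o (favorite L S h) := @Finset.le_max' ι L S o ho

theorem favorite_eq_of_forall_le {x : ι} (hx : x ∈ S) (hmax : ∀ o ∈ S, L.le o x) :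
    favorite L S h = x :=
  L.le_antisymm _ _ (hmax _ (favorite_mem L h)) (le_favorite L h hx)

end Favorite

section SeqAlloc

variable [DecidableEq ι] (P : Fin n → LinearOrder ι)

theorem seqAlloc_cons_of_nonempty (a : Fin n) (rest : List (Fin n)) {S : Finset ι}
    (h : S.Nonempty) :
    seqAlloc P (a :: rest) S =
      (a, favorite (P a) S h) :: seqAlloc P rest (S.erase (favorite (P a) S h)) := by
  rw [seqAlloc, dif_pos h]

theorem snd_mem_of_mem_seqAlloc :
    ∀ {l : List (Fin n)} {S : Finset ι} {x : Fin n × ι}, x ∈ seqAlloc P l S → x.2 ∈ S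
  | [], S, x, hx => by simp [seqAlloc] at hx
  | a :: rest, S, x, hx => by
    by_cases h : S.Nonempty
    · rw [seqAlloc_cons_of_nonempty P a rest h, List.mem_cons] at hx
      rcases hx with rfl | hx
      · exact favorite_mem _ h
      · exact mem_of_mem_erase (snd_mem_of_mem_seqAlloc hx)
    · simp [seqAlloc, h] at hx

theorem fst_eq_of_mem_seqAlloc :
    ∀ {l : List (Fin n)} {S : Finset ι} {a b : Fin n} {o : ι},
      (a, o) ∈ seqAlloc P l S → (b, o) ∈ seqAlloc P l S → a = b
  | [], S, a, b, o, ha, _ => by simp [seqAlloc] at ha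
  | c :: rest, S, a, b, o, ha, hb => by
    by_cases h : S.Nonempty
    · rw [seqAlloc_cons_of_nonempty P c rest h] at ha hb
      have hlater : ∀ d, (d, favorite (P c) S h) ∉
          seqAlloc P rest (S.erase (favorite (P c) S h)) := fun d hd =>
        notMem_erase _ _ (snd_mem_of_mem_seqAlloc P hd)
      simp only [List.mem_cons, Prod.mk.injEq] at ha hb
      rcases ha with ⟨rfl, rfl⟩ | ha <;> rcases hb with ⟨rfl, hbo⟩ | hb
      · rfl
      · exact absurd hb (hlater b)
      · exact absurd (hbo ▸ ha) (hlater a)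
      · exact fst_eq_of_mem_seqAlloc ha hb
    · simp [seqAlloc, h] at ha

theorem seqAlloc_append_of_forall_le (q : Fin n → ι) :
    ∀ (r : List (Fin n)) (rest : List (Fin n)) (S : Finset ι), (r.map q).Nodup →
      (∀ a ∈ r, q a ∈ S) → (∀ a ∈ r, ∀ o ∈ S, (P a).le o (q a)) →
      seqAlloc P (r ++ rest) S =
        r.map (fun a => (a, q a)) ++ seqAlloc P rest (S \ (r.map q).toFinset)
  | [], rest, S, _, _, _ => by simp
  | a :: r, rest, S, hnd, hmem, hmax => by
    rw [List.map_cons, List.nodup_cons] at hnd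
    have hS : S.Nonempty := ⟨q a, hmem a List.mem_cons_self⟩
    have hfav : favorite (P a) S hS = q a :=
      favorite_eq_of_forall_le _ hS (hmem a List.mem_cons_self) (hmax a List.mem_cons_self)
    have hrest : (S.erase (q a)) \ (r.map q).toFinset = S \ ((a :: r).map q).toFinset := by
      ext o
      simp only [mem_sdiff, mem_erase, List.map_cons, List.toFinset_cons, mem_insert,
        List.mem_toFinset]
      tauto
    rw [List.cons_append, seqAlloc_cons_of_nonempty P a _ hS, hfav,
      seqAlloc_append_of_forall_le q r rest _ hnd.2
        (fun b hb => mem_erase.2 ⟨fun he => hnd.1 (by rw [← he]; exact List.mem_map_of_mem hb),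
          hmem b (List.mem_cons_of_mem a hb)⟩)
        (fun b hb o ho => hmax b (List.mem_cons_of_mem a hb) o (mem_of_mem_erase ho)),
      hrest]
    rfl

end SeqAlloc

theorem List.mem_of_count_eq_one {α : Type*} [BEq α] [LawfulBEq α] {l : List α}
    (hl : ∀ a, l.count a = 1) (a : α) : a ∈ l :=
  List.count_pos_iff.1 (by rw [hl]; exact Nat.one_pos)

theorem recBalanced_flatten_replicate {τ : List (Fin n)} (hlen : τ.length = n)
    (hτ : ∀ a, τ.count a = 1) : RecBalanced n k (List.replicate k τ).flatten :=
  ⟨_, List.length_replicate, fun _ hr => List.eq_of_mem_replicate hr ▸ ⟨hlen, hτ⟩, rfl⟩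

theorem count_cons_erase_finRange (j a : Fin n) :
    (j :: (List.finRange n).erase j).count a = 1 := by
  have hσ := List.nodup_iff_count_eq_one.1 (List.nodup_finRange n)
  by_cases ha : a = j
  · subst ha
    rw [List.count_cons_self, List.count_erase_self, hσ a (List.mem_finRange a)]
  · rw [List.count_cons_of_ne (Ne.symm ha), List.count_erase_of_ne ha,
      hσ a (List.mem_finRange a)]

theorem length_cons_erase_finRange (j : Fin n) :
    (j :: (List.finRange n).erase j).length = n := by
  rw [List.length_cons, List.length_erase_of_mem (List.mem_finRange j), List.length_finRange]
  have := j.pos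
  omega

namespace IsRankingOf

variable [Fintype ι] {P : Fin n → LinearOrder ι} {M : ι → Fin n} {p : Fin n → ℕ → ι}
  (hp : IsRankingOf P k M p)
include hp

theorem eq_of_eq {j j' : Fin n} {i i' : ℕ} (hi : 1 ≤ i) (hik : i ≤ k) (hi' : 1 ≤ i')
    (hi'k : i' ≤ k) (he : p j i = p j' i') : j = j' ∧ i = i' := by
  obtain ⟨hMj, hcard⟩ := hp j i hi hik
  obtain ⟨hMj', hcard'⟩ := hp j' i' hi' hi'k
  obtain rfl : j = j' := by rw [← hMj, ← hMj', he]
  rw [he, hcard'] at hcard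
  exact ⟨rfl, by omega⟩

theorem le_of_le (j : Fin n) {t s : ℕ} (ht : 1 ≤ t) (hts : t ≤ s) (hsk : s ≤ k) :
    (P j).le (p j s) (p j t) := by
  let := P j
  refine le_of_not_gt fun hlt => ?_
  obtain ⟨hMs, hcard_s⟩ := hp j s (ht.trans hts) hsk
  obtain ⟨-, hcard_t⟩ := hp j t ht (hts.trans hsk)
  have hsub : univ.filter (fun o => M o = j ∧ (P j).lt (p j s) o) ⊂
      univ.filter (fun o => M o = j ∧ (P j).lt (p j t) o) := by
    refine (ssubset_iff_of_subset fun o ho => ?_).2 ⟨p j s, ?_, fun ho => ?_⟩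
    · simp only [mem_filter, mem_univ, true_and] at ho ⊢
      exact ⟨ho.1, lt_trans hlt ho.2⟩
    · simp only [mem_filter, mem_univ, true_and]
      exact ⟨hMs, hlt⟩
    · simp only [mem_filter, mem_univ, true_and] at ho
      exact lt_irrefl _ ho.2
  have := card_lt_card hsub
  omega

theorem exists_eq (hbal : BalancedAlloc k M) (o : ι) :
    ∃ i, 1 ≤ i ∧ i ≤ k ∧ p (M o) i = o := by
  have hsub : (Icc 1 k).image (p (M o)) ⊆ univ.filter (fun o' => M o' = M o) := by
    intro x hx
    obtain ⟨i, hi, rfl⟩ := mem_image.1 hx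
    exact mem_filter.2 ⟨mem_univ _, (hp _ i (mem_Icc.1 hi).1 (mem_Icc.1 hi).2).1⟩
  have hcard : ((Icc 1 k).image (p (M o))).card = k := by
    rw [card_image_of_injOn, Nat.card_Icc, Nat.add_sub_cancel]
    intro i hi i' hi' he
    exact (hp.eq_of_eq (mem_Icc.1 hi).1 (mem_Icc.1 hi).2 (mem_Icc.1 hi').1
      (mem_Icc.1 hi').2 he).2
  have ho : o ∈ univ.filter (fun o' => M o' = M o) := mem_filter.2 ⟨mem_univ o, rfl⟩
  rw [← eq_of_subset_of_card_le hsub (by rw [hbal, hcard])] at ho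
  obtain ⟨i, hi, hio⟩ := mem_image.1 ho
  exact ⟨i, (mem_Icc.1 hi).1, (mem_Icc.1 hi).2, hio⟩

end IsRankingOf

section ItemsBefore

variable [DecidableEq ι] {p : Fin n → ℕ → ι}

/-- The items that `M` allocates in the rounds before round `t`. -/
noncomputable def itemsBefore (p : Fin n → ℕ → ι) (t : ℕ) : Finset ι :=
  image (fun x : Fin n × ℕ => p x.1 x.2) (univ ×ˢ Ico 1 t)

def IsFavoriteAt (P : Fin n → LinearOrder ι) (p : Fin n → ℕ → ι) (t : ℕ) : Prop :=
  ∀ j o, o ∉ itemsBefore p t → (P j).le o (p j t)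

theorem mem_itemsBefore {t : ℕ} {o : ι} :
    o ∈ itemsBefore p t ↔ ∃ j i, 1 ≤ i ∧ i < t ∧ p j i = o := by
  simp [itemsBefore, and_assoc]

theorem itemsBefore_one : itemsBefore p 1 = ∅ := by
  simp [itemsBefore]

theorem itemsBefore_succ {s : ℕ} (hs : 1 ≤ s) :
    itemsBefore p (s + 1) = itemsBefore p s ∪ univ.image (fun j => p j s) := by
  ext o
  simp only [mem_union, mem_itemsBefore, mem_image, mem_univ, true_and]
  constructor
  · rintro ⟨j, i, hi1, hi, rfl⟩
    rcases (Nat.lt_succ_iff.1 hi).lt_or_eq with hi | rfl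
    · exact Or.inl ⟨j, i, hi1, hi, rfl⟩
    · exact Or.inr ⟨j, rfl⟩
  · rintro (⟨j, i, hi1, hi, rfl⟩ | ⟨j, rfl⟩)
    · exact ⟨j, i, hi1, by omega, rfl⟩
    · exact ⟨j, s, hs, by omega, rfl⟩

end ItemsBefore

namespace IsRankingOf

variable [Fintype ι] [DecidableEq ι] {P : Fin n → LinearOrder ι} {M : ι → Fin n}
  {p : Fin n → ℕ → ι} (hp : IsRankingOf P k M p)
include hp

theorem notMem_itemsBefore (j : Fin n) {t : ℕ} (ht : 1 ≤ t) (htk : t ≤ k) :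
    p j t ∉ itemsBefore p t := by
  rw [mem_itemsBefore]
  rintro ⟨j', i, hi, hit, he⟩
  have := (hp.eq_of_eq hi (by omega) ht htk he).2
  omega

theorem seqAlloc_round {s : ℕ} (hs : 1 ≤ s) (hsk : s ≤ k) (hfav : IsFavoriteAt P p s)
    {r : List (Fin n)} (hr : ∀ a, r.count a = 1) (rest : List (Fin n)) :
    seqAlloc P (r ++ rest) (univ \ itemsBefore p s) =
      r.map (fun a => (a, p a s)) ++ seqAlloc P rest (univ \ itemsBefore p (s + 1)) := by
  have hnd : (r.map fun a => p a s).Nodup :=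
    (List.nodup_iff_count_le_one.2 fun a => (hr a).le).map
      fun a b he => (hp.eq_of_eq hs hsk hs hsk he).1
  have hpicked : (r.map fun a => p a s).toFinset = univ.image (fun j => p j s) := by
    ext o
    simp only [List.mem_toFinset, List.mem_map, mem_image, mem_univ, true_and]
    exact ⟨fun ⟨a, _, h⟩ => ⟨a, h⟩,
      fun ⟨a, h⟩ => ⟨a, List.mem_of_count_eq_one hr a, h⟩⟩
  rw [seqAlloc_append_of_forall_le P _ r rest _ hnd
      (fun a _ => mem_sdiff.2 ⟨mem_univ _, hp.notMem_itemsBefore a hs hsk⟩)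
      (fun a _ o ho => hfav a o (mem_sdiff.1 ho).2),
    hpicked, sdiff_sdiff_left, sup_eq_union, itemsBefore_succ hs]

theorem seqAlloc_rounds (rest : List (Fin n)) :
    ∀ (rs : List (List (Fin n))) (s : ℕ), 1 ≤ s → s + rs.length ≤ k + 1 →
      (∀ r ∈ rs, ∀ a, r.count a = 1) →
      (∀ t, s ≤ t → t < s + rs.length → IsFavoriteAt P p t) →
      ∃ pre, seqAlloc P (rs.flatten ++ rest) (univ \ itemsBefore p s) =
          pre ++ seqAlloc P rest (univ \ itemsBefore p (s + rs.length)) ∧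
        ∀ j t, s ≤ t → t < s + rs.length → (j, p j t) ∈ pre
  | [], _, _, _, _, _ => ⟨[], by simp, fun _ _ h1 h2 => by simp at h2; omega⟩
  | r :: rs, s, hs, hlen, hrs, hfav => by
    simp only [List.length_cons] at hlen hfav ⊢
    obtain ⟨pre, heq, hmem⟩ := seqAlloc_rounds rest rs (s + 1) (by omega) (by omega)
      (fun r' hr' => hrs r' (List.mem_cons_of_mem r hr'))
      (fun t h1 h2 => hfav t (by omega) (by omega))
    refine ⟨r.map (fun a => (a, p a s)) ++ pre, ?_, fun j t h1 h2 => ?_⟩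
    · rw [List.flatten_cons, List.append_assoc,
        hp.seqAlloc_round hs (by omega) (hfav s le_rfl (by omega)) (hrs r List.mem_cons_self),
        heq, List.append_assoc, Nat.add_right_comm, Nat.add_assoc]
    · rcases h1.eq_or_lt with rfl | h1
      · exact List.mem_append_left _
          (List.mem_map.2 ⟨j, List.mem_of_count_eq_one (hrs r List.mem_cons_self) j, rfl⟩)
      · exact List.mem_append_right _ (hmem j t h1 (by omega))

theorem isOutcome_of_isFavoriteAt (hbal : BalancedAlloc k M)
    (hfav : ∀ t, 1 ≤ t → t ≤ k → IsFavoriteAt P p t) {π : List (Fin n)}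
    (hπ : RecBalanced n k π) : IsOutcome P π M := by
  obtain ⟨rounds, hlen, hrounds, rfl⟩ := hπ
  obtain ⟨pre, heq, hmem⟩ := hp.seqAlloc_rounds [] rounds 1 le_rfl (by omega)
    (fun r hr => (hrounds r hr).2) (fun t h1 h2 => hfav t h1 (by omega))
  intro o
  obtain ⟨i, hi, hik, hio⟩ := hp.exists_eq hbal o
  rw [List.append_nil, itemsBefore_one, sdiff_empty] at heq
  simpa [heq, seqAlloc, hio] using hmem (M o) i hi (by omega)

theorem le_of_notMem_itemsBefore_of_isOutcome (hbal : BalancedAlloc k M) {t : ℕ} (ht : 1 ≤ t)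
    (htk : t ≤ k) (hprev : ∀ s, 1 ≤ s → s < t → IsFavoriteAt P p s)
    {rounds : List (List (Fin n))} (hlen : rounds.length = t - 1)
    (hrounds : ∀ r ∈ rounds, ∀ a, r.count a = 1) (j : Fin n) (rest : List (Fin n))
    (hout : IsOutcome P (rounds.flatten ++ j :: rest) M) :
    ∀ o, o ∉ itemsBefore p t → (P j).le o (p j t) := by
  obtain ⟨pre, heq, -⟩ := hp.seqAlloc_rounds (j :: rest) rounds 1 le_rfl (by omega) hrounds
    (fun s h1 h2 => hprev s h1 (by omega))
  have havail : p j t ∈ univ \ itemsBefore p t :=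
    mem_sdiff.2 ⟨mem_univ _, hp.notMem_itemsBefore j ht htk⟩
  rw [itemsBefore_one, sdiff_empty, show 1 + rounds.length = t by omega,
    seqAlloc_cons_of_nonempty P j rest ⟨_, havail⟩] at heq
  set f := favorite (P j) (univ \ itemsBefore p t) ⟨_, havail⟩
  have hMf : M f = j := fst_eq_of_mem_seqAlloc P (hout f) (by simp [heq])
  obtain ⟨i, hi, hik, hfi⟩ := hp.exists_eq hbal f
  rw [hMf] at hfi
  have hti : t ≤ i := by
    by_contra! hit
    exact (mem_sdiff.1 (favorite_mem _ _)).2 (mem_itemsBefore.2 ⟨j, i, hi, hit, hfi⟩)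
  have hf : f = p j t :=
    (P j).le_antisymm _ _ (hfi ▸ hp.le_of_le j ht hti hik) (le_favorite _ _ havail)
  exact fun o ho => hf ▸ le_favorite _ _ (mem_sdiff.2 ⟨mem_univ o, ho⟩)

end IsRankingOf

theorem necessary_assignment_recursively_balanced_general
    {ι : Type} [Fintype ι] [DecidableEq ι] {n k : ℕ}
    (P : Fin n → LinearOrder ι) (M : ι → Fin n) (hbal : BalancedAlloc k M)
    (p : Fin n → ℕ → ι) (hp : IsRankingOf P k M p) :
    (∀ π : List (Fin n), RecBalanced n k π → IsOutcome P π M) ↔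
      ∀ t : ℕ, 1 ≤ t → t ≤ k → ∀ j : Fin n, ∀ o : ι,
        o ∉ Finset.image (fun x : Fin n × ℕ => p x.1 x.2)
              (Finset.univ ×ˢ Finset.Ico 1 t) →
        (P j).le o (p j t) := by
  refine ⟨fun hout t => ?_, fun hfav _ => hp.isOutcome_of_isFavoriteAt hbal hfav⟩
  induction t using Nat.strong_induction_on with
  | _ t ih =>
    intro ht htk j
    let τ := j :: (List.finRange n).erase j
    have hτ : ∀ a, τ.count a = 1 := count_cons_erase_finRange j
    have hsplit : (List.replicate k τ).flatten =
        (List.replicate (t - 1) τ).flatten ++ j :: ((List.finRange n).erase j ++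
          (List.replicate (k - t) τ).flatten) := by
      rw [show k = t - 1 + (k - t + 1) by omega, List.replicate_add, List.flatten_append,
        List.replicate_succ, List.flatten_cons, show t - 1 + (k - t + 1) - t = k - t by omega]
      rfl
    have houtτ := hout _ (recBalanced_flatten_replicate (length_cons_erase_finRange j) hτ)
    rw [hsplit] at houtτ
    exact hp.le_of_notMem_itemsBefore_of_isOutcome hbal ht htk
      (fun s hs hst => ih s hst hs (by omega))
      List.length_replicate (fun r hr => List.eq_of_mem_replicate hr ▸ hτ) j _ houtτ

/-- A balanced allocation `M` is the outcome of every recursively balanced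
policy if and only if for every round `1 ≤ t ≤ k` and every agent `j`, the item `p j t`
is `j`'s most preferred item among the items not allocated by `M` in earlier rounds. -/
theorem necessary_assignment_recursively_balanced
    {ι : Type} [Fintype ι] [DecidableEq ι] {n k : ℕ} (hn : 0 < n) (hk : 1 ≤ k)
    (hcard : Fintype.card ι = k * n)
    (P : Fin n → LinearOrder ι) (M : ι → Fin n) (hbal : BalancedAlloc k M)
    (p : Fin n → ℕ → ι) (hp : IsRankingOf P k M p) :
    (∀ π : List (Fin n), RecBalanced n k π → IsOutcome P π M) ↔
      ∀ t : ℕ, 1 ≤ t → t ≤ k → ∀ j : Fin n, ∀ o : ι,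
        o ∉ Finset.image (fun x : Fin n × ℕ => p x.1 x.2)
              (Finset.univ ×ˢ Finset.Ico 1 t) →
        (P j).le o (p j t) :=
  necessary_assignment_recursively_balanced_general P M hbal p hp
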